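/- arXiv:2011.08640 — 2 statements merged into one kernel-verified Lean document; each statement's English description precedes it below -/
import Mathlib

section
/- Let M be a finite abelian group of order prime to p, which is a module over Z[G]/(N_G) where G is cyclic of order p generated by τ and N_G = 1 + τ + ... + τ^(p-1), equipped with a compatible action of Δ = (Z/pZ)^× acting on τ by σ·τ = τ^σ. Then the map φ : M^Δ ⊗_Z Z[G]/(N_G) → M given by Σ m_i ⊗ [τ^i] ↦ Σ τ^i m_i is an isomorphism of Δ-modules. In particular M ≅ (M^Δ)^(p-1) as abelian groups. -/
/-- The multiplicative group structure on `AddAut A` that older Mathlib provided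
(composition as multiplication); current Mathlib makes `AddAut A` an additive group. -/
instance AddAut.groupOld (A : Type*) [Add A] : Group (AddAut A) where
  mul g h := AddEquiv.trans h g
  one := AddEquiv.refl _
  inv := AddEquiv.symm
  mul_assoc _ _ _ := rfl
  one_mul _ := rfl
  mul_one _ := rfl
  inv_mul_cancel := AddEquiv.self_trans_symm

/-!
Write `θ = ∑_{σ ∈ Δ} σ` for the trace of `Δ`. Since `N_G` kills `M`, the character sums
`∑_{a ∈ Δ} τ^{a d}` act on `M` as `p·[d = 0] - 1`. Together with `σ τ^x = τ^{σ x} σ` this gives,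
for `Δ`-invariant `v`, `θ(τ^{-j} φ(v)) - θ(φ(v)) = p • v_j`, and for every `m`,
`φ(j ↦ θ(τ^{-j} m) - θ(m)) = p • m`. As `p` is invertible on `M`, `φ` is bijective with inverse
`m ↦ (p⁻¹ (θ(τ^{-j} m) - θ(m)))_j`.
-/

open Finset

namespace AddAut

variable {A : Type*}

@[simp]
theorem groupOld_mul_apply [Add A] (e₁ e₂ : AddAut A) (a : A) : (e₁ * e₂) a = e₁ (e₂ a) := rfl

@[simp]
theorem groupOld_one_apply [Add A] (a : A) : (1 : AddAut A) a = a := rfl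

def fixedAddSubgroup [AddGroup A] {Γ : Type*} (act : Γ → AddAut A) : AddSubgroup A where
  carrier := {a | ∀ σ, act σ a = a}
  zero_mem' _ := map_zero _
  add_mem' ha hb σ := by rw [map_add, ha σ, hb σ]
  neg_mem' ha σ := by rw [map_neg, ha σ]

theorem sum_apply_mem_fixedAddSubgroup [AddCommGroup A] {Γ : Type*} [Group Γ] [Fintype Γ]
    (act : Γ →* AddAut A) (a : A) : ∑ σ, act σ a ∈ fixedAddSubgroup act := fun σ' => by
  rw [map_sum]
  exact Fintype.sum_equiv (Equiv.mulLeft σ') _ _ fun σ => by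
    rw [← groupOld_mul_apply, ← map_mul, Equiv.coe_mulLeft]

end AddAut

theorem pow_val_add {p : ℕ} [NeZero p] {G : Type*} [Monoid G] {g : G} (hg : g ^ p = 1)
    (x y : ZMod p) : g ^ (x + y).val = g ^ x.val * g ^ y.val := by
  rw [ZMod.val_add, ← pow_eq_pow_mod _ hg, pow_add]

section PowVal

variable {p : ℕ} {M : Type*} [AddCommGroup M] {τ : AddAut M}

theorem sum_pow_val_eq_zero [NeZero p] (hN : ∀ m : M, ∑ i ∈ range p, (τ ^ i) m = 0) (m : M) :
    ∑ x : ZMod p, (τ ^ x.val) m = 0 := by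
  obtain ⟨n, rfl⟩ := Nat.exists_eq_succ_of_ne_zero (NeZero.ne p)
  exact (Fin.sum_univ_eq_sum_range (fun i => (τ ^ i) m) (n + 1)).trans (hN m)

theorem sum_pow_val_mul [Fact p.Prime] (hN : ∀ m : M, ∑ i ∈ range p, (τ ^ i) m = 0)
    (d : ZMod p) (m : M) :
    ∑ a : ZMod p, (τ ^ (a * d).val) m = if d = 0 then p • m else 0 := by
  split_ifs with hd
  · simp [hd]
  · exact (Fintype.sum_equiv (Equiv.mulRight₀ d hd) _ _ fun _ => rfl).trans
      (sum_pow_val_eq_zero hN m)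

theorem sum_units_pow_val_mul [Fact p.Prime] (hN : ∀ m : M, ∑ i ∈ range p, (τ ^ i) m = 0)
    (d : ZMod p) (m : M) :
    ∑ a : (ZMod p)ˣ, (τ ^ (a * d : ZMod p).val) m = (if d = 0 then p • m else 0) - m := by
  rw [← sum_pow_val_mul hN,
    Fintype.sum_eq_add_sum_subtype_ne (fun a : ZMod p => (τ ^ (a * d).val) m) 0,
    ← Fintype.sum_equiv unitsEquivNeZero (fun a : (ZMod p)ˣ => (τ ^ (a * d : ZMod p).val) m)
      (fun a => (τ ^ (a.1 * d).val) m) fun _ => rfl]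
  simp

end PowVal

section Descent

variable {p : ℕ} [Fact p.Prime] {M : Type*} [AddCommGroup M] {τ : AddAut M}
  {act : (ZMod p)ˣ →* AddAut M}

theorem apply_pow_val_apply (hτ : τ ^ p = 1)
    (hcomm : ∀ (σ : (ZMod p)ˣ) (m : M), act σ (τ m) = (τ ^ (σ : ZMod p).val) (act σ m))
    (σ : (ZMod p)ˣ) (x : ZMod p) (m : M) :
    act σ ((τ ^ x.val) m) = (τ ^ (σ * x : ZMod p).val) (act σ m) := by
  have h : SemiconjBy (act σ) τ (τ ^ (σ : ZMod p).val) := AddEquiv.ext (hcomm σ)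
  rw [← AddAut.groupOld_mul_apply, (h.pow_right x.val).eq, ← pow_mul, ZMod.val_mul,
    ← pow_eq_pow_mod _ hτ, AddAut.groupOld_mul_apply]

theorem sum_apply_pow_val_of_mem (hτ : τ ^ p = 1)
    (hN : ∀ m : M, ∑ i ∈ range p, (τ ^ i) m = 0)
    (hcomm : ∀ (σ : (ZMod p)ˣ) (m : M), act σ (τ m) = (τ ^ (σ : ZMod p).val) (act σ m))
    {x : M} (hx : x ∈ AddAut.fixedAddSubgroup act) (d : ZMod p) :
    ∑ σ, act σ ((τ ^ d.val) x) = (if d = 0 then p • x else 0) - x := by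
  rw [← sum_units_pow_val_mul hN]
  exact sum_congr rfl fun σ _ => by rw [apply_pow_val_apply hτ hcomm, hx σ]

variable (p) in
/-- The map `φ`, with `M^Δ ⊗ ℤ[G]/(N_G)` identified with `Δ → M^Δ` through the basis
`[τ^i]`, `i ∈ Δ`, of `ℤ[G]/(N_G)`. -/
def descentMap (τ : AddAut M) : ((ZMod p)ˣ → M) →+ M where
  toFun v := ∑ i : (ZMod p)ˣ, (τ ^ (i : ZMod p).val) (v i)
  map_zero' := by simp
  map_add' v w := by simp [sum_add_distrib]

theorem sum_apply_pow_val_descentMap (hτ : τ ^ p = 1)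
    (hN : ∀ m : M, ∑ i ∈ range p, (τ ^ i) m = 0)
    (hcomm : ∀ (σ : (ZMod p)ˣ) (m : M), act σ (τ m) = (τ ^ (σ : ZMod p).val) (act σ m))
    {v : (ZMod p)ˣ → M} (hv : ∀ i, v i ∈ AddAut.fixedAddSubgroup act) (c : ZMod p) :
    ∑ σ, act σ ((τ ^ c.val) (descentMap p τ v)) =
      ∑ i : (ZMod p)ˣ, ((if c + i = 0 then p • v i else 0) - v i) := by
  simp only [descentMap, AddMonoidHom.coe_mk, ZeroHom.coe_mk, map_sum,
    ← AddAut.groupOld_mul_apply, ← pow_val_add hτ]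
  rw [sum_comm]
  exact sum_congr rfl fun i _ => sum_apply_pow_val_of_mem hτ hN hcomm (hv i) _

theorem nsmul_eq_of_descentMap (hτ : τ ^ p = 1)
    (hN : ∀ m : M, ∑ i ∈ range p, (τ ^ i) m = 0)
    (hcomm : ∀ (σ : (ZMod p)ˣ) (m : M), act σ (τ m) = (τ ^ (σ : ZMod p).val) (act σ m))
    {v : (ZMod p)ˣ → M} (hv : ∀ i, v i ∈ AddAut.fixedAddSubgroup act) (j : (ZMod p)ˣ) :
    p • v j = ∑ σ, act σ ((τ ^ (-j : ZMod p).val) (descentMap p τ v)) -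
      ∑ σ, act σ (descentMap p τ v) := by
  have h0 := sum_apply_pow_val_descentMap hτ hN hcomm hv 0
  rw [ZMod.val_zero, pow_zero] at h0
  simp only [AddAut.groupOld_one_apply, zero_add, Units.ne_zero] at h0
  rw [h0, sum_apply_pow_val_descentMap hτ hN hcomm hv]
  simp [neg_add_eq_zero, Units.val_inj, sum_sub_distrib]

theorem descentMap_sum_apply_pow_val (hτ : τ ^ p = 1)
    (hN : ∀ m : M, ∑ i ∈ range p, (τ ^ i) m = 0)
    (hcomm : ∀ (σ : (ZMod p)ˣ) (m : M), act σ (τ m) = (τ ^ (σ : ZMod p).val) (act σ m))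
    (m : M) :
    descentMap p τ (fun j => ∑ σ, act σ ((τ ^ (-j : ZMod p).val) m) - ∑ σ, act σ m) = p • m := by
  have hB : ∑ j : (ZMod p)ˣ, (τ ^ (j : ZMod p).val) (∑ σ, act σ m) = -∑ σ, act σ m := by
    simpa using sum_units_pow_val_mul hN 1 (∑ σ, act σ m)
  have hA : ∑ j : (ZMod p)ˣ, (τ ^ (j : ZMod p).val) (∑ σ, act σ ((τ ^ (-j : ZMod p).val) m)) =
      p • m - ∑ σ, act σ m := by
    have hterm : ∀ σ j : (ZMod p)ˣ, (τ ^ (j : ZMod p).val) (act σ ((τ ^ (-j : ZMod p).val) m)) =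
        (τ ^ (j * (1 - σ) : ZMod p).val) (act σ m) := fun σ j => by
      rw [apply_pow_val_apply hτ hcomm, ← AddAut.groupOld_mul_apply, ← pow_val_add hτ]
      ring_nf
    simp only [map_sum, hterm]
    rw [sum_comm]
    simp [sum_units_pow_val_mul hN, sub_eq_zero, @eq_comm (ZMod p) 1, sum_sub_distrib]
  simp only [descentMap, AddMonoidHom.coe_mk, ZeroHom.coe_mk, map_sub, sum_sub_distrib, hA, hB]
  abel

theorem apply_descentMap (hτ : τ ^ p = 1)
    (hcomm : ∀ (σ : (ZMod p)ˣ) (m : M), act σ (τ m) = (τ ^ (σ : ZMod p).val) (act σ m))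
    {v : (ZMod p)ˣ → M} (hv : ∀ i, v i ∈ AddAut.fixedAddSubgroup act) (σ : (ZMod p)ˣ) :
    act σ (descentMap p τ v) = descentMap p τ (fun i => v (σ⁻¹ * i)) := by
  simp only [descentMap, AddMonoidHom.coe_mk, ZeroHom.coe_mk, map_sum]
  exact Fintype.sum_equiv (Equiv.mulLeft σ) (fun i => act σ ((τ ^ (i : ZMod p).val) (v i)))
    (fun i => (τ ^ (i : ZMod p).val) (v (σ⁻¹ * i))) fun i => by
      simp [apply_pow_val_apply hτ hcomm, hv i σ]

theorem eq_zero_of_descentMap_eq_zero (hM : (Nat.card M).Coprime p) (hτ : τ ^ p = 1)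
    (hN : ∀ m : M, ∑ i ∈ range p, (τ ^ i) m = 0)
    (hcomm : ∀ (σ : (ZMod p)ˣ) (m : M), act σ (τ m) = (τ ^ (σ : ZMod p).val) (act σ m))
    {v : (ZMod p)ˣ → M} (hv : ∀ i, v i ∈ AddAut.fixedAddSubgroup act)
    (h0 : descentMap p τ v = 0) : v = 0 :=
  funext fun j => hM.nsmul_right_bijective.1 <| by
    simpa [h0] using nsmul_eq_of_descentMap hτ hN hcomm hv j

theorem exists_descentMap_eq (hM : (Nat.card M).Coprime p) (hτ : τ ^ p = 1)
    (hN : ∀ m : M, ∑ i ∈ range p, (τ ^ i) m = 0)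
    (hcomm : ∀ (σ : (ZMod p)ˣ) (m : M), act σ (τ m) = (τ ^ (σ : ZMod p).val) (act σ m))
    (m : M) :
    ∃ v : (ZMod p)ˣ → M, (∀ i, v i ∈ AddAut.fixedAddSubgroup act) ∧ descentMap p τ v = m := by
  obtain ⟨m, rfl⟩ := hM.nsmul_right_bijective.2 m
  exact ⟨_, fun _ => sub_mem (AddAut.sum_apply_mem_fixedAddSubgroup _ _)
    (AddAut.sum_apply_mem_fixedAddSubgroup _ _), descentMap_sum_apply_pow_val hτ hN hcomm m⟩

theorem bijective_descentMap_comp_subtype (hM : (Nat.card M).Coprime p) (hτ : τ ^ p = 1)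
    (hN : ∀ m : M, ∑ i ∈ range p, (τ ^ i) m = 0)
    (hcomm : ∀ (σ : (ZMod p)ˣ) (m : M), act σ (τ m) = (τ ^ (σ : ZMod p).val) (act σ m)) :
    Function.Bijective
      ((descentMap p τ).comp ((AddAut.fixedAddSubgroup act).subtype.compLeft (ZMod p)ˣ)) := by
  refine ⟨(injective_iff_map_eq_zero _).2 fun v h0 => funext fun i => Subtype.ext ?_, fun m => ?_⟩
  · exact congrFun (eq_zero_of_descentMap_eq_zero hM hτ hN hcomm (fun i => (v i).2) h0) i
  · obtain ⟨v, hv, rfl⟩ := exists_descentMap_eq hM hτ hN hcomm m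
    exact ⟨fun i => ⟨v i, hv i⟩, rfl⟩

end Descent

theorem stmt_4_general (p : ℕ) [Fact p.Prime]
    (M : Type) [AddCommGroup M] (hM : (Nat.card M).Coprime p)
    (τ : AddAut M) (hτ : τ ^ p = 1)
    (hN : ∀ m : M, ∑ i ∈ Finset.range p, (τ ^ i) m = 0)
    (act : (ZMod p)ˣ →* AddAut M)
    (hcomm : ∀ (σ : (ZMod p)ˣ) (m : M),
      act σ (τ m) = (τ ^ ((σ : ZMod p)).val) (act σ m)) :
    -- φ is injective
    (∀ v : (ZMod p)ˣ → M, (∀ i σ, act σ (v i) = v i) →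
      (∑ i : (ZMod p)ˣ, (τ ^ ((i : ZMod p)).val) (v i)) = 0 → v = 0) ∧
    -- φ is surjective
    (∀ m : M, ∃ v : (ZMod p)ˣ → M, (∀ i σ, act σ (v i) = v i) ∧
      (∑ i : (ZMod p)ˣ, (τ ^ ((i : ZMod p)).val) (v i)) = m) ∧
    -- φ is Δ-equivariant (Δ permutes the coordinates of the tensor factor)
    (∀ (σ : (ZMod p)ˣ) (v : (ZMod p)ˣ → M), (∀ i σ', act σ' (v i) = v i) →
      act σ (∑ i : (ZMod p)ˣ, (τ ^ ((i : ZMod p)).val) (v i)) =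
        ∑ i : (ZMod p)ˣ, (τ ^ ((i : ZMod p)).val) (v (σ⁻¹ * i))) ∧
    -- in particular, M ≅ (M^Δ)^(p-1) as abelian groups
    (∃ S : AddSubgroup M, (S : Set M) = {m : M | ∀ σ, act σ m = m} ∧
      Nonempty (M ≃+ (Fin (p - 1) → S))) := by
  refine ⟨fun v hv h0 => eq_zero_of_descentMap_eq_zero hM hτ hN hcomm hv h0,
    exists_descentMap_eq hM hτ hN hcomm, fun σ v hv => apply_descentMap hτ hcomm hv σ,
    AddAut.fixedAddSubgroup act, rfl, ⟨?_⟩⟩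
  exact (AddEquiv.ofBijective _ (bijective_descentMap_comp_subtype hM hτ hN hcomm)).symm.trans
    (AddEquiv.arrowCongr (Fintype.equivFinOfCardEq (ZMod.card_units p)) (AddEquiv.refl _))

/-- Let `M` be a finite abelian group of order prime to `p`, a module over
`ℤ[G]/(N_G)` (encoded by an automorphism `τ` of order dividing `p` on which the norm
element acts as zero) with a compatible twisted action of `Δ = (ℤ/p)ˣ` (`σ·τ = τ^σ`).
Then `φ : M^Δ ⊗ ℤ[G]/(N_G) → M`, `Σ mᵢ ⊗ [τ^i] ↦ Σ τ^i mᵢ`, is an isomorphism of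
`Δ`-modules; in particular `M ≅ (M^Δ)^(p-1)` as abelian groups. -/
theorem stmt_4 (p : ℕ) [Fact p.Prime] (hodd : Odd p)
    (M : Type) [AddCommGroup M] [Finite M] (hM : (Nat.card M).Coprime p)
    (τ : AddAut M) (hτ : τ ^ p = 1)
    (hN : ∀ m : M, ∑ i ∈ Finset.range p, (τ ^ i) m = 0)
    (act : (ZMod p)ˣ →* AddAut M)
    (hcomm : ∀ (σ : (ZMod p)ˣ) (m : M),
      act σ (τ m) = (τ ^ ((σ : ZMod p)).val) (act σ m)) :
    -- φ is injective
    (∀ v : (ZMod p)ˣ → M, (∀ i σ, act σ (v i) = v i) →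
      (∑ i : (ZMod p)ˣ, (τ ^ ((i : ZMod p)).val) (v i)) = 0 → v = 0) ∧
    -- φ is surjective
    (∀ m : M, ∃ v : (ZMod p)ˣ → M, (∀ i σ, act σ (v i) = v i) ∧
      (∑ i : (ZMod p)ˣ, (τ ^ ((i : ZMod p)).val) (v i)) = m) ∧
    -- φ is Δ-equivariant (Δ permutes the coordinates of the tensor factor)
    (∀ (σ : (ZMod p)ˣ) (v : (ZMod p)ˣ → M), (∀ i σ', act σ' (v i) = v i) →
      act σ (∑ i : (ZMod p)ˣ, (τ ^ ((i : ZMod p)).val) (v i)) =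
        ∑ i : (ZMod p)ˣ, (τ ^ ((i : ZMod p)).val) (v (σ⁻¹ * i))) ∧
    -- in particular, M ≅ (M^Δ)^(p-1) as abelian groups
    (∃ S : AddSubgroup M, (S : Set M) = {m : M | ∀ σ, act σ m = m} ∧
      Nonempty (M ≃+ (Fin (p - 1) → S))) :=
  stmt_4_general p M hM τ hτ hN act hcomm
end

section
/- Let Ω = {[[a,x],[0,1]] : a ∈ F_q^×, x ∈ F_q}, with χ_L the character of the regular representation, χ_K the permutation character on Ω/G, χ_F the permutation character on Ω/Δ, and χ_k the trivial character. Then, as class functions on Ω: χ_L - χ_k = (χ_K - χ_k) + (q-1)(χ_F - χ_k). -/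
/-!
Writing elements of `Ω` as `!![a, x; 0, 1]`, the left cosets of `G` are the fibres of the entry
`a` and those of `Δ` the fibres of the entry `x`, on which `g = !![a, x; 0, 1]` acts by `b ↦ a b`
and `y ↦ a y + x`. So `χ_K(g)` is `q - 1` or `0` according as `a = 1` or not, and `χ_F(g)` counts
the fixed points of the affine map `y ↦ a y + x`: `q` for `g = 1`, none for a nontrivial
translation, exactly one when `a ≠ 1`. The identity then holds case by case.
-/

open scoped Classical

open Matrix

section FixedCosets

variable {Γ X : Type*} [Group Γ] {Ω H : Subgroup Γ} {f : Γ → X}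

theorem image_mul_left_eq_fiber {c : X} (hH : ∀ N, N ∈ H ↔ N ∈ Ω ∧ f N = c) {w : Γ}
    (hw : w ∈ Ω) (hf : ∀ N ∈ Ω, f (w * N) = f w ↔ f N = c) :
    (fun h => w * h) '' (H : Set Γ) = {M | M ∈ Ω ∧ f M = f w} := by
  ext M
  rw [Set.image_mul_left, Set.mem_preimage, SetLike.mem_coe, hH, Set.mem_ofPred_eq,
    Subgroup.mul_mem_cancel_left Ω (inv_mem hw)]
  refine and_congr_right fun hM => ?_
  rw [← hf _ (mul_mem (inv_mem hw) hM), mul_inv_cancel_left]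

theorem card_fixed_leftCosets
    (hH : ∀ w ∈ Ω, (fun h => w * h) '' (H : Set Γ) = {M | M ∈ Ω ∧ f M = f w})
    {g : Γ} (hg : g ∈ Ω) {t : X → X} (ht : ∀ w ∈ Ω, f (g * w) = t (f w)) :
    Nat.card {S : Set Γ | (∃ w ∈ Ω, S = (fun h => w * h) '' (H : Set Γ)) ∧
      (fun h => g * h) '' S = S} = Nat.card (f '' {w | w ∈ Ω ∧ t (f w) = f w}) := by
  set fiber : X → Set Γ := fun y => {M | M ∈ Ω ∧ f M = y}
  replace hH : ∀ w ∈ Ω, (fun h => w * h) '' (H : Set Γ) = fiber (f w) := hH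
  have fiber_injOn : Set.InjOn fiber (f '' Ω) := by
    rintro _ ⟨m, hm, rfl⟩ y - h
    exact (show m ∈ fiber y from h ▸ ⟨hm, rfl⟩).2
  have translate : ∀ w ∈ Ω, (fun h => g * h) '' fiber (f w) = fiber (t (f w)) := by
    intro w hw
    rw [← hH w hw, Set.image_image]
    simp_rw [← mul_assoc]
    rw [hH _ (mul_mem hg hw), ht w hw]
  have fixed_iff : ∀ w ∈ Ω, (fun h => g * h) '' fiber (f w) = fiber (f w) ↔ t (f w) = f w :=
    fun w hw => by
      rw [translate w hw]
      exact ⟨fun h => fiber_injOn (ht w hw ▸ ⟨_, mul_mem hg hw, rfl⟩) ⟨w, hw, rfl⟩ h,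
        congrArg fiber⟩
  have hS : {S : Set Γ | (∃ w ∈ Ω, S = (fun h => w * h) '' (H : Set Γ)) ∧
      (fun h => g * h) '' S = S} = fiber '' (f '' {w | w ∈ Ω ∧ t (f w) = f w}) := by
    ext S
    constructor
    · rintro ⟨⟨w, hw, rfl⟩, hfix⟩
      rw [hH w hw, fixed_iff w hw] at hfix
      exact ⟨f w, ⟨w, ⟨hw, hfix⟩, rfl⟩, (hH w hw).symm⟩
    · rintro ⟨_, ⟨w, ⟨hw, hfix⟩, rfl⟩, rfl⟩
      exact ⟨⟨w, hw, (hH w hw).symm⟩, (fixed_iff w hw).2 hfix⟩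
  rw [hS, Nat.card_coe_set_eq, Nat.card_coe_set_eq, Set.InjOn.ncard_image]
  exact fiber_injOn.mono (Set.image_mono fun w hw => hw.1)

end FixedCosets

section FixedPointCounts

variable {F : Type*} [Field F]

theorem ncard_fixed_mul_ne_zero [Finite F] (a : F) :
    {b : F | b ≠ 0 ∧ a * b = b}.ncard = if a = 1 then Nat.card F - 1 else 0 := by
  split_ifs with ha
  · subst ha
    simp only [one_mul, and_true]
    rw [← Set.compl_singleton_eq, Set.ncard_compl, Set.ncard_singleton]
  · convert Set.ncard_empty F
    refine Set.eq_empty_of_forall_notMem fun b ⟨hb, hab⟩ => ha ?_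
    exact mul_right_cancel₀ hb (hab.trans (one_mul b).symm)

theorem ncard_fixed_affine (a x : F) :
    {y : F | a * y + x = y}.ncard =
      if a = 1 then (if x = 0 then Nat.card F else 0) else 1 := by
  split_ifs with ha hx
  · simp [ha, hx, Set.ncard_univ]
  · simp [ha, hx]
  · have h1a : 1 - a ≠ 0 := sub_ne_zero.2 (Ne.symm ha)
    rw [Set.ncard_eq_one]
    refine ⟨x / (1 - a), Set.ext fun y => ?_⟩
    rw [Set.mem_singleton_iff, eq_div_iff h1a, Set.mem_ofPred_eq]
    constructor <;> intro h <;> linear_combination -h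

end FixedPointCounts

namespace AffineGroup

variable {F : Type*} [Field F]

theorem mul_apply_zero_zero (M : Matrix (Fin 2) (Fin 2) F) {N : Matrix (Fin 2) (Fin 2) F}
    (hN : N 1 0 = 0) : (M * N) 0 0 = M 0 0 * N 0 0 := by
  simp [Matrix.mul_apply, Fin.sum_univ_two, hN]

theorem mul_apply_zero_one (M : Matrix (Fin 2) (Fin 2) F) {N : Matrix (Fin 2) (Fin 2) F}
    (hN : N 1 1 = 1) : (M * N) 0 1 = M 0 0 * N 0 1 + M 0 1 := by
  simp [Matrix.mul_apply, Fin.sum_univ_two, hN]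

def toGL (a x : F) (ha : a ≠ 0) : GL (Fin 2) F :=
  .mkOfDetNeZero !![a, x; 0, 1] (by simpa [det_fin_two_of] using ha)

@[simp] theorem val_toGL (a x : F) (ha : a ≠ 0) : (toGL a x ha).val = !![a, x; 0, 1] :=
  GeneralLinearGroup.val_mkOfDetNeZero _ _

variable {Ω : Subgroup (GL (Fin 2) F)}
  (hΩ : ∀ M : GL (Fin 2) F, M ∈ Ω ↔ (M.val 1 0 = 0 ∧ M.val 1 1 = 1))
include hΩ

theorem toGL_mem (a x : F) (ha : a ≠ 0) : toGL a x ha ∈ Ω := by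
  simp [hΩ]

theorem val_zero_zero_ne_zero {M : GL (Fin 2) F} (hM : M ∈ Ω) : M.val 0 0 ≠ 0 := by
  have h := GeneralLinearGroup.det_ne_zero M
  obtain ⟨h10, h11⟩ := (hΩ M).1 hM
  rwa [det_fin_two, h10, h11, mul_one, mul_zero, sub_zero] at h

theorem ext_of_mem {M N : GL (Fin 2) F} (hM : M ∈ Ω) (hN : N ∈ Ω)
    (h00 : M.val 0 0 = N.val 0 0) (h01 : M.val 0 1 = N.val 0 1) : M = N := by
  obtain ⟨hM10, hM11⟩ := (hΩ M).1 hM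
  obtain ⟨hN10, hN11⟩ := (hΩ N).1 hN
  ext i j
  fin_cases i <;> fin_cases j <;> simp [*]

theorem eq_one_iff {g : GL (Fin 2) F} (hg : g ∈ Ω) : g = 1 ↔ g.val 0 0 = 1 ∧ g.val 0 1 = 0 :=
  ⟨by rintro rfl; simp, fun ⟨h00, h01⟩ => ext_of_mem hΩ hg (one_mem Ω) (by simp [h00])
    (by simp [h01])⟩

theorem image_val_zero_zero (p : F → Prop) :
    (fun M : GL (Fin 2) F => M.val 0 0) '' {w | w ∈ Ω ∧ p (w.val 0 0)} = {b | b ≠ 0 ∧ p b} := by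
  ext b
  constructor
  · rintro ⟨w, ⟨hw, hp⟩, rfl⟩
    exact ⟨val_zero_zero_ne_zero hΩ hw, hp⟩
  · rintro ⟨hb, hp⟩
    exact ⟨toGL b 0 hb, ⟨toGL_mem hΩ b 0 hb, by simpa using hp⟩, by simp⟩

theorem image_val_zero_one (p : F → Prop) :
    (fun M : GL (Fin 2) F => M.val 0 1) '' {w | w ∈ Ω ∧ p (w.val 0 1)} = {y | p y} := by
  ext y
  constructor
  · rintro ⟨w, ⟨-, hp⟩, rfl⟩
    exact hp
  · intro hp
    exact ⟨toGL 1 y one_ne_zero, ⟨toGL_mem hΩ 1 y one_ne_zero, by simpa using hp⟩, by simp⟩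

theorem card_eq [Finite F] : Nat.card Ω = (Nat.card F - 1) * Nat.card F := by
  have hinj : Set.InjOn (fun M : GL (Fin 2) F => (M.val 0 0, M.val 0 1)) Ω :=
    fun M hM N hN h => ext_of_mem hΩ hM hN (congrArg Prod.fst h) (congrArg Prod.snd h)
  have himage : (fun M : GL (Fin 2) F => (M.val 0 0, M.val 0 1)) '' Ω = {0}ᶜ ×ˢ Set.univ := by
    ext ⟨b, y⟩
    constructor
    · rintro ⟨M, hM, h⟩
      cases h
      exact ⟨val_zero_zero_ne_zero hΩ hM, trivial⟩
    · rintro ⟨hb : b ≠ 0, -⟩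
      exact ⟨toGL b y hb, toGL_mem hΩ b y hb, by simp⟩
  rw [← SetLike.coe_sort_coe, Nat.card_coe_set_eq, ← hinj.ncard_image, himage, Set.ncard_prod,
    Set.ncard_compl, Set.ncard_singleton, Set.ncard_univ]

theorem val_mul_zero_zero {M N : GL (Fin 2) F} (hN : N ∈ Ω) :
    (M * N).val 0 0 = M.val 0 0 * N.val 0 0 :=
  mul_apply_zero_zero _ ((hΩ N).1 hN).1

theorem val_mul_zero_one {M N : GL (Fin 2) F} (hN : N ∈ Ω) :
    (M * N).val 0 1 = M.val 0 0 * N.val 0 1 + M.val 0 1 :=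
  mul_apply_zero_one _ ((hΩ N).1 hN).2

theorem card_fixed_cosets_of_diagonal_one {G : Subgroup (GL (Fin 2) F)}
    (hG : ∀ M : GL (Fin 2) F, M ∈ G ↔ (M ∈ Ω ∧ M.val 0 0 = 1)) {g : GL (Fin 2) F} (hg : g ∈ Ω) :
    Nat.card {S : Set (GL (Fin 2) F) |
      (∃ w ∈ Ω, S = (fun h => w * h) '' (G : Set (GL (Fin 2) F))) ∧ (fun h => g * h) '' S = S} =
      {b : F | b ≠ 0 ∧ g.val 0 0 * b = b}.ncard := by
  have hcoset : ∀ w ∈ Ω, (fun h => w * h) '' (G : Set (GL (Fin 2) F)) =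
      {M | M ∈ Ω ∧ M.val 0 0 = w.val 0 0} := fun w hw =>
    image_mul_left_eq_fiber hG hw fun N hN => by
      rw [val_mul_zero_zero hΩ hN, mul_eq_left₀ (val_zero_zero_ne_zero hΩ hw)]
  rw [card_fixed_leftCosets hcoset hg fun w hw => val_mul_zero_zero hΩ hw,
    image_val_zero_zero hΩ (fun b => g.val 0 0 * b = b), Nat.card_coe_set_eq]

theorem card_fixed_cosets_of_corner_zero {Δ : Subgroup (GL (Fin 2) F)}
    (hΔ : ∀ M : GL (Fin 2) F, M ∈ Δ ↔ (M ∈ Ω ∧ M.val 0 1 = 0)) {g : GL (Fin 2) F} (hg : g ∈ Ω) :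
    Nat.card {S : Set (GL (Fin 2) F) |
      (∃ w ∈ Ω, S = (fun h => w * h) '' (Δ : Set (GL (Fin 2) F))) ∧ (fun h => g * h) '' S = S} =
      {y : F | g.val 0 0 * y + g.val 0 1 = y}.ncard := by
  have hcoset : ∀ w ∈ Ω, (fun h => w * h) '' (Δ : Set (GL (Fin 2) F)) =
      {M | M ∈ Ω ∧ M.val 0 1 = w.val 0 1} := fun w hw =>
    image_mul_left_eq_fiber hΔ hw fun N hN => by
      rw [val_mul_zero_one hΩ hN, add_eq_right, mul_eq_zero,
        or_iff_right (val_zero_zero_ne_zero hΩ hw)]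
  rw [card_fixed_leftCosets hcoset hg (t := fun y => g.val 0 0 * y + g.val 0 1)
      fun w hw => val_mul_zero_one hΩ hw,
    image_val_zero_one hΩ (fun y => g.val 0 0 * y + g.val 0 1 = y), Nat.card_coe_set_eq]

end AffineGroup

open AffineGroup

/-- for `Ω = {[[a,x],[0,1]]}`, with `χ_L` the character of the regular
representation, `χ_K`, `χ_F` the permutation characters on `Ω/G`, `Ω/Δ` and `χ_k ≡ 1`
the trivial character, as class functions on `Ω`:
`χ_L - χ_k = (χ_K - χ_k) + (q-1)(χ_F - χ_k)`. -/
theorem stmt_13 (F : Type) [Field F] [Fintype F]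
    (Ω G Δ : Subgroup (GL (Fin 2) F))
    (hΩ : ∀ M : GL (Fin 2) F, M ∈ Ω ↔ (M.val 1 0 = 0 ∧ M.val 1 1 = 1))
    (hG : ∀ M : GL (Fin 2) F, M ∈ G ↔ (M ∈ Ω ∧ M.val 0 0 = 1))
    (hΔ : ∀ M : GL (Fin 2) F, M ∈ Δ ↔ (M ∈ Ω ∧ M.val 0 1 = 0))
    (g : GL (Fin 2) F) (hg : g ∈ Ω)
    (χL χK χF : ℤ)
    (hχL : χL = if g = 1 then (Nat.card Ω : ℤ) else 0)
    (hχK : χK = Nat.card {S : Set (GL (Fin 2) F) |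
      (∃ w ∈ Ω, S = (fun h => w * h) '' (G : Set (GL (Fin 2) F))) ∧
      (fun h => g * h) '' S = S})
    (hχF : χF = Nat.card {S : Set (GL (Fin 2) F) |
      (∃ w ∈ Ω, S = (fun h => w * h) '' (Δ : Set (GL (Fin 2) F))) ∧
      (fun h => g * h) '' S = S}) :
    χL - 1 = (χK - 1) + ((Fintype.card F : ℤ) - 1) * (χF - 1) := by
  rw [hχL, hχK, hχF, card_fixed_cosets_of_diagonal_one hΩ hG hg,
    card_fixed_cosets_of_corner_zero hΩ hΔ hg, ncard_fixed_mul_ne_zero, ncard_fixed_affine,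
    card_eq hΩ, Nat.card_eq_fintype_card]
  simp only [eq_one_iff hΩ hg]
  have hq : 1 ≤ Fintype.card F := Fintype.card_pos
  by_cases ha : g.val 0 0 = 1
  · by_cases hx : g.val 0 1 = 0
    · simp only [ha, hx, and_self, if_true, Nat.cast_mul, Nat.cast_sub hq]
      ring
    · simp [ha, hx, Nat.cast_sub hq]
  · simp [ha]
end
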